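/- If M and N are strongly normalizing for βμμ'-reduction but the application (M N) is not strongly normalizing, then either M ▷* λy.P with P[y:=N] not strongly normalizing, or M ▷* μα.P with P[α=_r N] not strongly normalizing, or N ▷* μα.P with P[α=_l M] not strongly normalizing. -/

import Mathlib

/-- λμ-terms: variables, λ-abstraction, application, μ-abstraction, named term (α M). -/
inductive Trm : Type
  | var : ℕ → Trm
  | lam : ℕ → Trm → Trm
  | app : Trm → Trm → Trm
  | mu  : ℕ → Trm → Trm
  | mv  : ℕ → Trm → Trm
  deriving DecidableEq

namespace Trm

/-- Substitution M[x:=N]. -/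
def subst : Trm → ℕ → Trm → Trm
  | var y, x, N => if y = x then N else var y
  | lam y B, x, N => if y = x then lam y B else lam y (subst B x N)
  | app A B, x, N => app (subst A x N) (subst B x N)
  | mu a B, x, N => mu a (subst B x N)
  | mv a B, x, N => mv a (subst B x N)

/-- M[α=_r N]: replace each subterm (α U) by (α (U N)). -/
def rsub : Trm → ℕ → Trm → Trm
  | var y, _, _ => var y
  | lam y B, a, N => lam y (rsub B a N)
  | app A B, a, N => app (rsub A a N) (rsub B a N)
  | mu b B, a, N => if b = a then mu b B else mu b (rsub B a N)
  | mv b B, a, N => if b = a then mv b (app (rsub B a N) N) else mv b (rsub B a N)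

/-- M[α=_l N]: replace each subterm (α U) by (α (N U)). -/
def lsub : Trm → ℕ → Trm → Trm
  | var y, _, _ => var y
  | lam y B, a, N => lam y (lsub B a N)
  | app A B, a, N => app (lsub A a N) (lsub B a N)
  | mu b B, a, N => if b = a then mu b B else mu b (lsub B a N)
  | mv b B, a, N => if b = a then mv b (app N (lsub B a N)) else mv b (lsub B a N)

/-- One-step βμμ'-reduction (compatible closure). -/
inductive Red : Trm → Trm → Prop
  | beta (x M N) : Red (app (lam x M) N) (subst M x N)
  | muR (a M N) : Red (app (mu a M) N) (mu a (rsub M a N))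
  | muL (a M N) : Red (app M (mu a N)) (mu a (lsub N a M))
  | appL {M M'} (N) : Red M M' → Red (app M N) (app M' N)
  | appR (M) {N N'} : Red N N' → Red (app M N) (app M N')
  | lamC (x) {M M'} : Red M M' → Red (lam x M) (lam x M')
  | muC (a) {M M'} : Red M M' → Red (mu a M) (mu a M')
  | mvC (a) {M M'} : Red M M' → Red (mv a M) (mv a M')

/-- ▷*: reflexive transitive closure. -/
def Reds : Trm → Trm → Prop := Relation.ReflTransGen Red

/-- Strong normalization: no infinite reduction sequence. -/
def SN (M : Trm) : Prop := Acc (fun a b => Red b a) M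

/-- Left-nested application (h M₁ ... Mₙ). -/
def appList (h : Trm) (l : List Trm) : Trm := l.foldl app h

end Trm

/-!
Induct on the strong normalization of `M` and then of `N`. A term that is not strongly
normalizing has a one-step reduct that is not either. If the step from `M N` contracts the head
redex, its contractum is `P[y:=N]`, `μα.P[α=_r N]` or `μα.P[α=_l M]`, and a μ-abstraction is
strongly normalizing as soon as its body is. If the step reduces `M` to `M'` (or `N` to `N'`), the
induction hypothesis for `M' N` (or `M N'`) applies; its conclusion transfers back to `M N` because
the substitution operators are monotone in their argument, so e.g. `P[α=_l M] ▷* P[α=_l M']`.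
-/

open Trm

namespace Trm

lemma Reds.app {A A' B B'} (hA : Reds A A') (hB : Reds B B') : Reds (app A B) (app A' B') :=
  (Relation.ReflTransGen.lift (fun t => Trm.app t B) (fun _ _ h => Red.appL B h) _ _ hA).trans
    (Relation.ReflTransGen.lift (fun t => Trm.app A' t) (fun _ _ h => Red.appR A' h) _ _ hB)

lemma Reds.lam (x : ℕ) {M M'} (h : Reds M M') : Reds (lam x M) (lam x M') :=
  Relation.ReflTransGen.lift (fun t => Trm.lam x t) (fun _ _ h => Red.lamC x h) _ _ h

lemma Reds.mu (a : ℕ) {M M'} (h : Reds M M') : Reds (mu a M) (mu a M') :=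
  Relation.ReflTransGen.lift (fun t => Trm.mu a t) (fun _ _ h => Red.muC a h) _ _ h

lemma Reds.mv (a : ℕ) {M M'} (h : Reds M M') : Reds (mv a M) (mv a M') :=
  Relation.ReflTransGen.lift (fun t => Trm.mv a t) (fun _ _ h => Red.mvC a h) _ _ h

lemma Red.subst_arg (P : Trm) (y : ℕ) {N N'} (h : Red N N') :
    Reds (subst P y N) (subst P y N') := by
  induction P with
  | var z =>
    simp only [subst]
    split
    · exact .single h
    · exact .refl
  | lam z B ih =>
    simp only [subst]
    split
    · exact .refl
    · exact ih.lam z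
  | app A B ihA ihB => exact ihA.app ihB
  | mu b B ih => exact ih.mu b
  | mv b B ih => exact ih.mv b

lemma Red.rsub_arg (P : Trm) (a : ℕ) {N N'} (h : Red N N') :
    Reds (rsub P a N) (rsub P a N') := by
  induction P with
  | var z => exact .refl
  | lam z B ih => exact ih.lam z
  | app A B ihA ihB => exact ihA.app ihB
  | mu b B ih =>
    simp only [rsub]
    split
    · exact .refl
    · exact ih.mu b
  | mv b B ih =>
    simp only [rsub]
    split
    · exact (ih.app (.single h)).mv b
    · exact ih.mv b

lemma Red.lsub_arg (P : Trm) (a : ℕ) {N N'} (h : Red N N') :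
    Reds (lsub P a N) (lsub P a N') := by
  induction P with
  | var z => exact .refl
  | lam z B ih => exact ih.lam z
  | app A B ihA ihB => exact ihA.app ihB
  | mu b B ih =>
    simp only [lsub]
    split
    · exact .refl
    · exact ih.mu b
  | mv b B ih =>
    simp only [lsub]
    split
    · exact (Reds.app (.single h) ih).mv b
    · exact ih.mv b

lemma SN.of_reds {X Y} (h : SN X) (r : Reds X Y) : SN Y := by
  induction r with
  | refl => exact h
  | tail _ s ih => exact ih.inv s

lemma SN.mu (a : ℕ) {Q : Trm} (h : SN Q) : SN (mu a Q) := by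
  induction h with
  | intro Q _ ih =>
    refine Acc.intro _ fun X hX => ?_
    cases hX with
    | muC a s => exact ih _ s

lemma exists_red_not_SN {X : Trm} (h : ¬ SN X) : ∃ Y, Red X Y ∧ ¬ SN Y := by
  by_contra! hc
  exact h (Acc.intro X hc)

def HasDivergentRedex (M N : Trm) : Prop :=
  (∃ (y : ℕ) (P : Trm), Reds M (lam y P) ∧ ¬ SN (subst P y N)) ∨
  (∃ (a : ℕ) (P : Trm), Reds M (mu a P) ∧ ¬ SN (rsub P a N)) ∨
  (∃ (a : ℕ) (P : Trm), Reds N (mu a P) ∧ ¬ SN (lsub P a M))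

lemma HasDivergentRedex.of_red_left {M M' N} (hstep : Red M M')
    (h : HasDivergentRedex M' N) : HasDivergentRedex M N := by
  rcases h with ⟨y, P, hr, hP⟩ | ⟨a, P, hr, hP⟩ | ⟨a, P, hr, hP⟩
  · exact .inl ⟨y, P, .head hstep hr, hP⟩
  · exact .inr (.inl ⟨a, P, .head hstep hr, hP⟩)
  · exact .inr (.inr ⟨a, P, hr, fun hsn => hP (hsn.of_reds (hstep.lsub_arg P a))⟩)

lemma HasDivergentRedex.of_red_right {M N N'} (hstep : Red N N')
    (h : HasDivergentRedex M N') : HasDivergentRedex M N := by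
  rcases h with ⟨y, P, hr, hP⟩ | ⟨a, P, hr, hP⟩ | ⟨a, P, hr, hP⟩
  · exact .inl ⟨y, P, hr, fun hsn => hP (hsn.of_reds (hstep.subst_arg P y))⟩
  · exact .inr (.inl ⟨a, P, hr, fun hsn => hP (hsn.of_reds (hstep.rsub_arg P a))⟩)
  · exact .inr (.inr ⟨a, P, .head hstep hr, hP⟩)

end Trm

theorem app_not_sn {M N : Trm} (hM : SN M) (hN : SN N) (h : ¬ SN (app M N)) :
    (∃ (y : ℕ) (P : Trm), Reds M (lam y P) ∧ ¬ SN (subst P y N)) ∨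
    (∃ (a : ℕ) (P : Trm), Reds M (mu a P) ∧ ¬ SN (rsub P a N)) ∨
    (∃ (a : ℕ) (P : Trm), Reds N (mu a P) ∧ ¬ SN (lsub P a M)) := by
  show HasDivergentRedex M N
  induction hM generalizing N with
  | intro M _ ihM =>
    induction hN with
    | intro N hN_acc ihN =>
      obtain ⟨X, hX, hX_not_SN⟩ := exists_red_not_SN h
      cases hX with
      | beta y P => exact .inl ⟨y, P, .refl, hX_not_SN⟩
      | muR a P => exact .inr (.inl ⟨a, P, .refl, mt (SN.mu a) hX_not_SN⟩)
      | muL a _ P => exact .inr (.inr ⟨a, P, .refl, mt (SN.mu a) hX_not_SN⟩)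
      | appL _ hstep => exact (ihM _ hstep (Acc.intro N hN_acc) hX_not_SN).of_red_left hstep
      | appR _ hstep => exact (ihN _ hstep hX_not_SN).of_red_right hstep
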